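/- arXiv:1303.6672 — 5 statements merged into one kernel-verified Lean document; each statement's English description precedes it below -/
import Mathlib

section
/- For any nonempty closed convex cone C in R^d, the squared norm of the conic projection map x ↦ ‖Π_C(x)‖² is differentiable everywhere with gradient 2Π_C(x). -/
open MeasureTheory ProbabilityTheory Real
open scoped InnerProductSpace ENNReal NNReal Pointwise

/-- The standard Gaussian measure on `ℝ^d`. -/
noncomputable def stdGaussian (d : ℕ) : Measure (EuclideanSpace ℝ (Fin d)) :=
  (Measure.pi fun _ : Fin d => gaussianReal 0 1).map
    (MeasurableEquiv.toLp 2 (Fin d → ℝ))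

/-!
For a cone, the optimality conditions of the projection `a = Π_C x` read `⟪x - a, a⟫ = 0` and
`⟪x - a, c⟫ ≤ 0` on `C`. With `b = Π_C y` they give the exact identity
`‖b‖² - ‖a‖² - 2⟪a, y - x⟫ = ‖b - a‖² - 2⟪y - b, a⟫ ≥ ‖b - a‖²`; adding the same bound with
`x, y` swapped and `2⟪b - a, y - x⟫ ≤ ‖b - a‖² + ‖y - x‖²` squeezes the remainder between `0`
and `‖y - x‖²`, which is `o(‖y - x‖)`.
-/

open Asymptotics Filter
open scoped RealInnerProductSpace Topology

section

variable {E : Type*} [NormedAddCommGroup E] [InnerProductSpace ℝ E]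

theorem real_inner_sub_sub_nonpos_of_forall_norm_sub_le {C : Set E} (hC : Convex ℝ C)
    {x p : E} (hp : p ∈ C) (hmin : ∀ y ∈ C, ‖x - p‖ ≤ ‖x - y‖) :
    ∀ c ∈ C, ⟪x - p, c - p⟫ ≤ 0 := by
  have : Nonempty C := ⟨⟨p, hp⟩⟩
  refine (norm_eq_iInf_iff_real_inner_le_zero hC hp).1 (le_antisymm ?_ ?_)
  · exact le_ciInf fun y => hmin y y.2
  · exact ciInf_le ⟨0, Set.forall_mem_range.2 fun y => norm_nonneg _⟩ (⟨p, hp⟩ : C)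

section Cone

variable {C : Set E} (hcone : ∀ t : ℝ, 0 < t → ∀ x ∈ C, t • x ∈ C) {v p : E}
  (hp : p ∈ C) (hv : ∀ c ∈ C, ⟪v, c - p⟫ ≤ 0)
include hcone hp hv

/-- Testing against `2 • p` and `(1 / 2) • p` gives both signs. -/
theorem real_inner_eq_zero_of_cone : ⟪v, p⟫ = 0 := by
  have h₂ := hv _ (hcone 2 two_pos p hp)
  have h₁ := hv _ (hcone (1 / 2) one_half_pos p hp)
  rw [inner_sub_right, real_inner_smul_right] at h₂ h₁
  linarith

theorem real_inner_nonpos_of_cone {c : E} (hc : c ∈ C) : ⟪v, c⟫ ≤ 0 := by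
  have := hv c hc
  rwa [inner_sub_right, real_inner_eq_zero_of_cone hcone hp hv, sub_zero] at this

end Cone

variable {x y a b : E}

theorem norm_sub_sq_le_sq_norm_sub_sq_norm_sub_inner (ha : ⟪x - a, a⟫ = 0)
    (hba : ⟪y - b, a⟫ ≤ 0) : ‖b - a‖ ^ 2 ≤ ‖b‖ ^ 2 - ‖a‖ ^ 2 - ⟪(2 : ℝ) • a, y - x⟫ := by
  have hid : ‖b‖ ^ 2 - ‖a‖ ^ 2 - ⟪(2 : ℝ) • a, y - x⟫
      = ‖b - a‖ ^ 2 - 2 * ⟪y - b, a⟫ + 2 * ⟪x - a, a⟫ := by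
    simp only [norm_sub_sq_real, real_inner_smul_left, inner_sub_right,
      real_inner_self_eq_norm_sq, real_inner_comm a]
    ring
  linarith

theorem abs_sq_norm_sub_sq_norm_sub_inner_le (ha : ⟪x - a, a⟫ = 0) (hb : ⟪y - b, b⟫ = 0)
    (hab : ⟪x - a, b⟫ ≤ 0) (hba : ⟪y - b, a⟫ ≤ 0) :
    |‖b‖ ^ 2 - ‖a‖ ^ 2 - ⟪(2 : ℝ) • a, y - x⟫| ≤ ‖y - x‖ ^ 2 := by
  have hxy := norm_sub_sq_le_sq_norm_sub_sq_norm_sub_inner ha hba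
  have hyx := norm_sub_sq_le_sq_norm_sub_sq_norm_sub_inner (x := y) (y := x) hb hab
  have hsum : (‖b‖ ^ 2 - ‖a‖ ^ 2 - ⟪(2 : ℝ) • a, y - x⟫)
      + (‖a‖ ^ 2 - ‖b‖ ^ 2 - ⟪(2 : ℝ) • b, x - y⟫) = 2 * ⟪b - a, y - x⟫ := by
    simp only [real_inner_smul_left, inner_sub_left, inner_sub_right]
    ring
  have hcs : 2 * ⟪b - a, y - x⟫ ≤ ‖b - a‖ ^ 2 + ‖y - x‖ ^ 2 := by
    linarith [real_inner_le_norm (b - a) (y - x), two_mul_le_add_sq ‖b - a‖ ‖y - x‖]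
  rw [norm_sub_rev] at hyx
  rw [abs_le]
  constructor <;> linarith [sq_nonneg ‖b - a‖]

end

theorem gradient_sq_norm_proj_general (d : ℕ)
    (C : Set (EuclideanSpace ℝ (Fin d)))
    (hconv : Convex ℝ C)
    (hcone : ∀ (t : ℝ), 0 < t → ∀ x ∈ C, t • x ∈ C)
    (projC : EuclideanSpace ℝ (Fin d) → EuclideanSpace ℝ (Fin d))
    (hprojC : ∀ x, projC x ∈ C ∧ ∀ y ∈ C, ‖x - projC x‖ ≤ ‖x - y‖)
    (x : EuclideanSpace ℝ (Fin d)) :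
    HasGradientAt (fun y => ‖projC y‖ ^ 2) ((2 : ℝ) • projC x) x := by
  have hvar z := real_inner_sub_sub_nonpos_of_forall_norm_sub_le hconv (hprojC z).1 (hprojC z).2
  have horth z := real_inner_eq_zero_of_cone hcone (hprojC z).1 (hvar z)
  have hpolar z {c} (hc : c ∈ C) := real_inner_nonpos_of_cone hcone (hprojC z).1 (hvar z) hc
  have hbound : (fun y => ‖projC y‖ ^ 2 - ‖projC x‖ ^ 2 - ⟪(2 : ℝ) • projC x, y - x⟫)
      =O[𝓝 x] fun y => ‖y - x‖ ^ 2 :=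
    .of_bound 1 <| .of_forall fun y => by
      simpa only [Real.norm_eq_abs, norm_pow, abs_norm, one_mul] using abs_sq_norm_sub_sq_norm_sub_inner_le (horth x) (horth y)
        (hpolar x (hprojC y).1) (hpolar y (hprojC x).1)
  exact hasGradientAt_iff_isLittleO.2 <|
    hbound.trans_isLittleO (isLittleO_pow_sub_sub x one_lt_two)

/-- The map `x ↦ ‖Π_C x‖²` is differentiable everywhere with gradient `2 Π_C x`. -/
theorem gradient_sq_norm_proj (d : ℕ)
    (C : Set (EuclideanSpace ℝ (Fin d)))
    (hconv : Convex ℝ C) (hclosed : IsClosed C) (hne : C.Nonempty)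
    (hcone : ∀ (t : ℝ), 0 < t → ∀ x ∈ C, t • x ∈ C)
    (projC : EuclideanSpace ℝ (Fin d) → EuclideanSpace ℝ (Fin d))
    (hprojC : ∀ x, projC x ∈ C ∧ ∀ y ∈ C, ‖x - projC x‖ ≤ ‖x - y‖)
    (x : EuclideanSpace ℝ (Fin d)) :
    HasGradientAt (fun y => ‖projC y‖ ^ 2) ((2 : ℝ) • projC x) x :=
  gradient_sq_norm_proj_general d C hconv hcone projC hprojC x
end

section
/- Let S be a nonempty compact convex subset of R^d with 0 < b ≤ ‖s‖ ≤ B for all s ∈ S. For fixed u ∈ R^d, the function F_u(τ) := dist²(u, τS) is convex on [0, ∞), and F_u(τ) ≥ (τb − ‖u‖)² for all τ ≥ ‖u‖/b. -/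
open MeasureTheory ProbabilityTheory Real
open scoped InnerProductSpace ENNReal NNReal Pointwise

namespace Metric

variable {E : Type*} [SeminormedAddCommGroup E]

theorem sub_norm_le_infDist {T : Set E} (hT : T.Nonempty) {r : ℝ} (hr : ∀ t ∈ T, r ≤ ‖t‖)
    (u : E) : r - ‖u‖ ≤ infDist u T :=
  (le_infDist hT).2 fun t ht => by
    rw [dist_comm, dist_eq_norm]
    linarith [hr t ht, norm_sub_norm_le t u]

variable [NormedSpace ℝ E]

theorem infDist_add_smul_le (u : E) {A C : Set E} {a c : ℝ} (ha : 0 ≤ a) (hc : 0 ≤ c)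
    (hac : a + c = 1) :
    infDist u (a • A + c • C) ≤ a * infDist u A + c * infDist u C := by
  rcases A.eq_empty_or_nonempty with rfl | hA
  · simpa using mul_nonneg hc infDist_nonneg
  rcases C.eq_empty_or_nonempty with rfl | hC
  · simpa using mul_nonneg ha infDist_nonneg
  refine le_of_forall_pos_le_add fun ε hε => ?_
  obtain ⟨x, hx, hxε⟩ := (infDist_lt_iff hA).1 (lt_add_of_pos_right (infDist u A) hε)
  obtain ⟨y, hy, hyε⟩ := (infDist_lt_iff hC).1 (lt_add_of_pos_right (infDist u C) hε)
  calc infDist u (a • A + c • C)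
      ≤ dist (a • x + c • y) u :=
        (infDist_le_dist_of_mem (Set.add_mem_add (Set.smul_mem_smul_set hx)
          (Set.smul_mem_smul_set hy))).trans_eq (dist_comm _ _)
    _ ≤ a * dist x u + c * dist y u := (convexOn_univ_dist u).2 trivial trivial ha hc hac
    _ ≤ a * (infDist u A + ε) + c * (infDist u C + ε) := by
        rw [dist_comm x, dist_comm y]
        gcongr
    _ = a * infDist u A + c * infDist u C + ε := by linear_combination ε * hac

theorem convexOn_infDist_smul_set {S : Set E} (hS : Convex ℝ S) (u : E) :
    ConvexOn ℝ (Set.Ici 0) fun τ : ℝ => infDist u (τ • S) := by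
  refine ⟨convex_Ici 0, fun τ₀ (h₀ : 0 ≤ τ₀) τ₁ (h₁ : 0 ≤ τ₁) a c ha hc hac => ?_⟩
  simp only [smul_eq_mul]
  rw [hS.add_smul (mul_nonneg ha h₀) (mul_nonneg hc h₁), mul_smul, mul_smul]
  exact infDist_add_smul_le u ha hc hac

end Metric

theorem dist_sq_dilated_convex_general (d : ℕ)
    (S : Set (EuclideanSpace ℝ (Fin d))) (hne : S.Nonempty)
    (hconv : Convex ℝ S)
    (b B : ℝ) (hb : 0 < b)
    (hbB : ∀ s ∈ S, b ≤ ‖s‖ ∧ ‖s‖ ≤ B)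
    (u : EuclideanSpace ℝ (Fin d)) :
    ConvexOn ℝ (Set.Ici 0) (fun τ : ℝ => (Metric.infDist u (τ • S)) ^ 2) ∧
      ∀ τ : ℝ, ‖u‖ / b ≤ τ → (τ * b - ‖u‖) ^ 2 ≤ (Metric.infDist u (τ • S)) ^ 2 := by
  refine ⟨(Metric.convexOn_infDist_smul_set hconv u).pow (fun _ _ => Metric.infDist_nonneg) 2,
    fun τ hτ => ?_⟩
  have hτ₀ : 0 ≤ τ := (div_nonneg (norm_nonneg u) hb.le).trans hτ
  have hnorm : ∀ t ∈ τ • S, τ * b ≤ ‖t‖ := by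
    rintro _ ⟨s, hs, rfl⟩
    rw [norm_smul, norm_of_nonneg hτ₀]
    exact mul_le_mul_of_nonneg_left (hbB s hs).1 hτ₀
  exact pow_le_pow_left₀ (sub_nonneg.2 ((div_le_iff₀ hb).1 hτ))
    (Metric.sub_norm_le_infDist hne.smul_set hnorm u) 2

/-- For a nonempty compact convex set `S` with `0 < b ≤ ‖s‖ ≤ B` on `S`, the map
`τ ↦ dist²(u, τS)` is convex on `[0, ∞)`, and is bounded below by `(τb − ‖u‖)²`
whenever `τ ≥ ‖u‖/b`. -/
theorem dist_sq_dilated_convex (d : ℕ)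
    (S : Set (EuclideanSpace ℝ (Fin d))) (hne : S.Nonempty)
    (hconv : Convex ℝ S) (hcomp : IsCompact S)
    (b B : ℝ) (hb : 0 < b)
    (hbB : ∀ s ∈ S, b ≤ ‖s‖ ∧ ‖s‖ ≤ B)
    (u : EuclideanSpace ℝ (Fin d)) :
    ConvexOn ℝ (Set.Ici 0) (fun τ : ℝ => (Metric.infDist u (τ • S)) ^ 2) ∧
      ∀ τ : ℝ, ‖u‖ / b ≤ τ → (τ * b - ‖u‖) ^ 2 ≤ (Metric.infDist u (τ • S)) ^ 2 :=
  dist_sq_dilated_convex_general d S hne hconv b B hb hbB u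
end

section
/- Let S be a nonempty compact convex subset of R^d not containing the origin, with ‖s‖ ≤ B for all s ∈ S. For fixed τ ≥ 0, the map u ↦ ⟨u − π_{τS}(u), π_{τS}(u)⟩ is Lipschitz with constant τB, where π_{τS} is the Euclidean projection onto τS. -/
/-!
Write `a = π(u)`, `b = π(y)` and `r = (u - a) - (y - b)`. The variational inequalities
`⟪u - a, b - a⟫ ≤ 0` and `⟪y - b, a - b⟫ ≤ 0` of the projection onto the convex set `τS`
give `⟪r, a - b⟫ ≥ 0`, so `‖r‖ ≤ ‖r + (a - b)‖ = ‖u - y‖`. The second one also gives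
`⟪y - b, b⟫ ≥ ⟪y - b, a⟫`, hence `⟪u - a, a⟫ - ⟪y - b, b⟫ ≤ ⟪r, a⟫ ≤ ‖u - y‖ ‖a‖ ≤ τB ‖u - y‖`;
the other direction is symmetric.
-/

open MeasureTheory ProbabilityTheory Real
open scoped InnerProductSpace ENNReal NNReal Pointwise

section Projection

variable {E : Type*} [NormedAddCommGroup E] [InnerProductSpace ℝ E]

theorem real_inner_sub_le_zero_of_forall_norm_sub_le {K : Set E} (hK : Convex ℝ K)
    {x p : E} (hp : p ∈ K) (hmin : ∀ w ∈ K, ‖x - p‖ ≤ ‖x - w‖) :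
    ∀ w ∈ K, ⟪x - p, w - p⟫_ℝ ≤ 0 := by
  have : Nonempty K := ⟨⟨p, hp⟩⟩
  refine (norm_eq_iInf_iff_real_inner_le_zero hK hp).mp (le_antisymm ?_ ?_)
  · exact le_ciInf fun w => hmin w w.2
  · have : BddBelow (Set.range fun w : K => ‖x - w‖) := ⟨0, fun _ ⟨_, h⟩ => h ▸ norm_nonneg _⟩
    exact ciInf_le this ⟨p, hp⟩

variable {u y a b : E}

theorem norm_sub_sub_sub_le_of_real_inner_le_zero
    (hu : ⟪u - a, b - a⟫_ℝ ≤ 0) (hy : ⟪y - b, a - b⟫_ℝ ≤ 0) :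
    ‖(u - a) - (y - b)‖ ≤ ‖u - y‖ := by
  set r := (u - a) - (y - b)
  have hr : 0 ≤ ⟪r, a - b⟫_ℝ := by
    have : ⟪r, a - b⟫_ℝ = -⟪u - a, b - a⟫_ℝ - ⟪y - b, a - b⟫_ℝ := by
      rw [inner_sub_left, ← neg_sub b a, inner_neg_right]
    linarith
  have hsq : ‖r‖ ^ 2 ≤ ‖u - y‖ ^ 2 := by
    rw [show u - y = r + (a - b) by simp only [r]; abel, norm_add_sq_real]
    nlinarith [sq_nonneg ‖a - b‖]
  exact (pow_le_pow_iff_left₀ (norm_nonneg _) (norm_nonneg _) two_ne_zero).mp hsq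

theorem real_inner_residual_sub_le
    (hu : ⟪u - a, b - a⟫_ℝ ≤ 0) (hy : ⟪y - b, a - b⟫_ℝ ≤ 0) :
    ⟪u - a, a⟫_ℝ - ⟪y - b, b⟫_ℝ ≤ ‖u - y‖ * ‖a‖ := by
  have hb : ⟪y - b, a⟫_ℝ ≤ ⟪y - b, b⟫_ℝ := by
    rw [inner_sub_right] at hy
    linarith
  calc ⟪u - a, a⟫_ℝ - ⟪y - b, b⟫_ℝ
      ≤ ⟪(u - a) - (y - b), a⟫_ℝ := by rw [inner_sub_left (u - a)]; linarith
    _ ≤ ‖(u - a) - (y - b)‖ * ‖a‖ := real_inner_le_norm _ _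
    _ ≤ ‖u - y‖ * ‖a‖ := by
      gcongr
      exact norm_sub_sub_sub_le_of_real_inner_le_zero hu hy

end Projection

theorem inner_residual_proj_lipschitz_general (d : ℕ)
    (S : Set (EuclideanSpace ℝ (Fin d)))
    (hconv : Convex ℝ S)
    (B : ℝ) (hB : ∀ s ∈ S, ‖s‖ ≤ B)
    (τ : ℝ) (hτ : 0 ≤ τ)
    (projS : EuclideanSpace ℝ (Fin d) → EuclideanSpace ℝ (Fin d))
    (hprojS : ∀ x, projS x ∈ τ • S ∧ ∀ y ∈ τ • S, ‖x - projS x‖ ≤ ‖x - y‖) :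
    ∀ u y : EuclideanSpace ℝ (Fin d),
      |⟪u - projS u, projS u⟫_ℝ - ⟪y - projS y, projS y⟫_ℝ| ≤ τ * B * ‖u - y‖ := by
  have hvar x : ∀ w ∈ τ • S, ⟪x - projS x, w - projS x⟫_ℝ ≤ 0 :=
    real_inner_sub_le_zero_of_forall_norm_sub_le (hconv.smul τ) (hprojS x).1 (hprojS x).2
  have hbound x : ‖projS x‖ ≤ τ * B := by
    obtain ⟨s, hs, hsx⟩ := (hprojS x).1
    rw [← hsx, norm_smul, Real.norm_of_nonneg hτ]
    exact mul_le_mul_of_nonneg_left (hB s hs) hτ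
  intro u y
  have huy := hvar u (projS y) (hprojS y).1
  have hyu := hvar y (projS u) (hprojS u).1
  rw [abs_sub_le_iff]
  constructor
  · calc _ ≤ ‖u - y‖ * ‖projS u‖ := real_inner_residual_sub_le huy hyu
      _ ≤ τ * B * ‖u - y‖ := by rw [mul_comm]; gcongr; exact hbound u
  · calc _ ≤ ‖y - u‖ * ‖projS y‖ := real_inner_residual_sub_le hyu huy
      _ ≤ τ * B * ‖u - y‖ := by rw [mul_comm, norm_sub_rev]; gcongr; exact hbound y

/-- For a nonempty compact convex set `S` not containing the origin, with
`‖s‖ ≤ B` on `S`, and `τ ≥ 0`, the map `u ↦ ⟨u − π_{τS}(u), π_{τS}(u)⟩` is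
Lipschitz with constant `τB`. -/
theorem inner_residual_proj_lipschitz (d : ℕ)
    (S : Set (EuclideanSpace ℝ (Fin d))) (hne : S.Nonempty)
    (hconv : Convex ℝ S) (hcomp : IsCompact S)
    (h0 : (0 : EuclideanSpace ℝ (Fin d)) ∉ S)
    (B : ℝ) (hB : ∀ s ∈ S, ‖s‖ ≤ B)
    (τ : ℝ) (hτ : 0 ≤ τ)
    (projS : EuclideanSpace ℝ (Fin d) → EuclideanSpace ℝ (Fin d))
    (hprojS : ∀ x, projS x ∈ τ • S ∧ ∀ y ∈ τ • S, ‖x - projS x‖ ≤ ‖x - y‖) :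
    ∀ u y : EuclideanSpace ℝ (Fin d),
      |⟪u - projS u, projS u⟫_ℝ - ⟪y - projS y, projS y⟫_ℝ| ≤ τ * B * ‖u - y‖ :=
  inner_residual_proj_lipschitz_general d S hconv B hB τ hτ projS hprojS
end

section
/- Let f be a proper convex function on R^d and x a point at which the subdifferential ∂f(x) is nonempty, compact, and does not contain the origin. Then the statistical dimension of the descent cone satisfies δ(D(f,x)) ≤ inf_{τ≥0} E[dist²(g, τ·∂f(x))], where g is a standard Gaussian vector. -/
open MeasureTheory ProbabilityTheory Real
open scoped InnerProductSpace ENNReal NNReal Pointwise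

/-- The polar cone of a set `C ⊆ ℝ^d`. -/
def polarCone {d : ℕ} (C : Set (EuclideanSpace ℝ (Fin d))) : Set (EuclideanSpace ℝ (Fin d)) :=
  {u | ∀ x ∈ C, ⟪u, x⟫_ℝ ≤ 0}

/-- The subdifferential of `f` at `x`. -/
def subdiff {d : ℕ} (f : EuclideanSpace ℝ (Fin d) → ℝ) (x : EuclideanSpace ℝ (Fin d)) :
    Set (EuclideanSpace ℝ (Fin d)) :=
  {u | ∀ y, f x + ⟪u, y - x⟫_ℝ ≤ f y}

/-- The descent cone of `f` at `x`. -/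
def descentCone {d : ℕ} (f : EuclideanSpace ℝ (Fin d) → ℝ) (x : EuclideanSpace ℝ (Fin d)) :
    Set (EuclideanSpace ℝ (Fin d)) :=
  ⋃ τ ∈ Set.Ioi (0 : ℝ), {y | f (x + τ • y) ≤ f x}

/-! Only the easy half of `D(f,x)° = cone ∂f(x)` is needed: every subgradient `u`
satisfies `⟪u, y⟫ ≤ 0` on the descent cone, so `τ ∂f(x) ⊆ D(f,x)°` and distances to the polar
are dominated pointwise by distances to `τ ∂f(x)`. Gaussian vectors have finite second moment,
which makes both sides integrable. -/

lemma stdGaussian_eq_stdGaussian_euclideanSpace (d : ℕ) :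
    stdGaussian d = ProbabilityTheory.stdGaussian (EuclideanSpace ℝ (Fin d)) :=
  map_pi_eq_stdGaussian

instance isGaussian_stdGaussian_fin (d : ℕ) : IsGaussian (stdGaussian d) := by
  rw [stdGaussian_eq_stdGaussian_euclideanSpace]
  infer_instance

section infDist

variable {E : Type*} [NormedAddCommGroup E] [MeasurableSpace E] [OpensMeasurableSpace E]
  {μ : Measure E} [IsFiniteMeasure μ]

lemma memLp_infDist_of_memLp_id {p : ℝ≥0∞} (hμ : MemLp id p μ) {s : Set E} (hs : s.Nonempty) :
    MemLp (fun x => Metric.infDist x s) p μ := by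
  obtain ⟨s₀, hs₀⟩ := hs
  refine (hμ.sub (memLp_const s₀)).mono
    (Metric.continuous_infDist_pt s).measurable.aestronglyMeasurable (ae_of_all _ fun x => ?_)
  rw [Real.norm_of_nonneg Metric.infDist_nonneg, Pi.sub_apply, id, ← dist_eq_norm]
  exact Metric.infDist_le_dist_of_mem hs₀

lemma integral_infDist_sq_le_of_subset (hμ : MemLp id 2 μ) {s t : Set E} (hst : s ⊆ t)
    (hs : s.Nonempty) :
    ∫ x, Metric.infDist x t ^ 2 ∂μ ≤ ∫ x, Metric.infDist x s ^ 2 ∂μ :=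
  integral_mono_of_nonneg (ae_of_all _ fun _ => by positivity)
    (memLp_infDist_of_memLp_id hμ hs).integrable_sq
    (ae_of_all _ fun x => pow_le_pow_left₀ Metric.infDist_nonneg
      (Metric.infDist_le_infDist_of_subset hst hs) 2)

end infDist

lemma inner_nonpos_of_mem_subdiff_of_mem_descentCone {d : ℕ} {f : EuclideanSpace ℝ (Fin d) → ℝ}
    {x u y : EuclideanSpace ℝ (Fin d)} (hu : u ∈ subdiff f x) (hy : y ∈ descentCone f x) :
    ⟪u, y⟫_ℝ ≤ 0 := by
  obtain ⟨σ, hσ, hdescent⟩ : ∃ σ : ℝ, 0 < σ ∧ f (x + σ • y) ≤ f x := by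
    simpa [descentCone] using hy
  have hsub := hu (x + σ • y)
  rw [add_sub_cancel_left, real_inner_smul_right] at hsub
  exact nonpos_of_mul_nonpos_right (by linarith) hσ

lemma smul_subdiff_subset_polarCone_descentCone {d : ℕ} (f : EuclideanSpace ℝ (Fin d) → ℝ)
    (x : EuclideanSpace ℝ (Fin d)) {τ : ℝ} (hτ : 0 ≤ τ) :
    τ • subdiff f x ⊆ polarCone (descentCone f x) := by
  rintro _ ⟨u, hu, rfl⟩ y hy
  rw [real_inner_smul_left]
  exact mul_nonpos_of_nonneg_of_nonpos hτ (inner_nonpos_of_mem_subdiff_of_mem_descentCone hu hy)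

theorem statdim_descent_cone_le_general (d : ℕ)
    (f : EuclideanSpace ℝ (Fin d) → ℝ)
    (x : EuclideanSpace ℝ (Fin d))
    (hne : (subdiff f x).Nonempty) :
    ∀ τ : ℝ, 0 ≤ τ →
      ∫ g, (Metric.infDist g (polarCone (descentCone f x))) ^ 2 ∂(stdGaussian d)
        ≤ ∫ g, (Metric.infDist g (τ • subdiff f x)) ^ 2 ∂(stdGaussian d) := fun _ hτ =>
  integral_infDist_sq_le_of_subset (IsGaussian.memLp_id _ 2 ENNReal.ofNat_ne_top)
    (smul_subdiff_subset_polarCone_descentCone f x hτ) hne.smul_set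

/-- The statistical dimension of the descent cone, `δ(D(f,x)) = E[dist²(g, D(f,x)°)]`,
is bounded by `E[dist²(g, τ ∂f(x))]` for every `τ ≥ 0`. -/
theorem statdim_descent_cone_le (d : ℕ)
    (f : EuclideanSpace ℝ (Fin d) → ℝ) (hf : ConvexOn ℝ Set.univ f)
    (x : EuclideanSpace ℝ (Fin d))
    (hne : (subdiff f x).Nonempty) (hcomp : IsCompact (subdiff f x))
    (h0 : (0 : EuclideanSpace ℝ (Fin d)) ∉ subdiff f x) :
    ∀ τ : ℝ, 0 ≤ τ →
      ∫ g, (Metric.infDist g (polarCone (descentCone f x))) ^ 2 ∂(stdGaussian d)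
        ≤ ∫ g, (Metric.infDist g (τ • subdiff f x)) ^ 2 ∂(stdGaussian d) :=
  statdim_descent_cone_le_general d f x hne
end

section
/- Let x ∈ R^d have its first s entries nonzero (s ≥ 1) and the rest zero. For the ℓ₁ norm, the expected squared distance from a standard Gaussian vector g to the dilated subdifferential τ·∂‖x‖₁ equals s(1 + τ²) + (d − s)·√(2/π)·∫_τ^∞ (u − τ)² e^{−u²/2} du, for every τ ≥ 0. -/
open MeasureTheory ProbabilityTheory Real
open scoped InnerProductSpace ENNReal NNReal Pointwise

/-!
The subdifferential of `‖·‖₁` at `x` is the product of the subdifferentials of `|·|` at the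
coordinates `x i`, so `τ • ∂‖x‖₁` is a box whose sides are the points `τ • sign (x i)` on the
support of `x` and the intervals `[-τ, τ]` off it. The squared distance to a box splits into a sum
of squared distances to its sides, one per independent Gaussian coordinate: a side `{±τ}`
contributes `E (g ∓ τ)² = 1 + τ²`, and a side `[-τ, τ]` contributes `E (|g| - τ)₊²`, which the
symmetry of the Gaussian density folds into the tail integral over `(τ, ∞)`.
-/

open Set

lemma abs_subgradient_iff {a c : ℝ} :
    (∀ t, |a| + c * (t - a) ≤ |t|) ↔ |c| ≤ 1 ∧ c * a = |a| := by
  refine ⟨fun h => ?_, fun ⟨hc, hca⟩ t => ?_⟩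
  · have hlin : ∀ t, |a| + c * t - c * a ≤ |t| := fun t => by linarith [h t, mul_sub c t a]
    have h0 := hlin 0
    have h2 := hlin (2 * a)
    have h1 := hlin 1
    have hm := hlin (-1)
    rw [mul_zero, abs_zero] at h0
    rw [abs_mul, abs_two, mul_left_comm] at h2
    rw [mul_one, abs_one] at h1
    rw [mul_neg_one, abs_neg, abs_one] at hm
    exact ⟨abs_le.2 ⟨by linarith, by linarith⟩, by linarith⟩
  · calc |a| + c * (t - a) = c * t := by linarith
      _ ≤ |c| * |t| := by rw [← abs_mul]; exact le_abs_self _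
      _ ≤ |t| := mul_le_of_le_one_left (abs_nonneg t) hc

lemma mem_subdiff_l1_iff {d : ℕ} {x u : EuclideanSpace ℝ (Fin d)} :
    u ∈ subdiff (fun y => ∑ i, |y i|) x ↔ ∀ i, |u i| ≤ 1 ∧ u i * x i = |x i| := by
  have hinner : ∀ y : EuclideanSpace ℝ (Fin d), ⟪u, y - x⟫_ℝ = ∑ i, u i * (y i - x i) := by
    intro y
    simp [PiLp.inner_apply, mul_comm]
  simp only [subdiff, mem_ofPred_eq, hinner, ← abs_subgradient_iff]
  refine ⟨fun h i t => ?_, fun h y => ?_⟩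
  · set y := x + EuclideanSpace.single i (t - x i)
    have hy : ∀ j, y j = x j + if j = i then t - x i else 0 := fun j => by
      simp [y, PiLp.single_apply]
    have key : 0 ≤ ∑ j, (|y j| - (|x j| + u j * (y j - x j))) := by
      rw [Finset.sum_sub_distrib, Finset.sum_add_distrib]
      exact sub_nonneg.2 (h y)
    rw [Finset.sum_eq_single i (fun j _ hj => by simp [hy, hj]) (by simp), hy] at key
    simp only [if_true, add_sub_cancel] at key
    linarith
  · rw [← Finset.sum_add_distrib]
    exact Finset.sum_le_sum fun i _ => h i (y i)

/-- `τ • ∂|·|(a)`. -/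
noncomputable def dilatedAbsSubdiff (τ a : ℝ) : Set ℝ :=
  if a = 0 then Icc (-τ) τ else {τ * SignType.sign a}

lemma isClosed_dilatedAbsSubdiff {τ a : ℝ} : IsClosed (dilatedAbsSubdiff τ a) := by
  unfold dilatedAbsSubdiff
  split_ifs
  exacts [isClosed_Icc, isClosed_singleton]

lemma nonempty_dilatedAbsSubdiff {τ : ℝ} (hτ : 0 ≤ τ) (a : ℝ) :
    (dilatedAbsSubdiff τ a).Nonempty := by
  unfold dilatedAbsSubdiff
  split_ifs
  exacts [nonempty_Icc.2 (by linarith), singleton_nonempty _]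

lemma mem_dilatedAbsSubdiff_iff {τ a c : ℝ} (hτ : 0 ≤ τ) :
    c ∈ dilatedAbsSubdiff τ a ↔ |c| ≤ τ ∧ c * a = τ * |a| := by
  unfold dilatedAbsSubdiff
  split_ifs with ha
  · simp [ha, abs_le]
  rw [mem_singleton_iff]
  rcases lt_or_gt_of_ne ha with ha | ha
  · rw [sign_neg ha, SignType.coe_neg_one, abs_of_neg ha]
    constructor
    · rintro rfl
      simp [abs_of_nonneg hτ]
    · rintro ⟨-, h⟩
      exact mul_right_cancel₀ ha.ne (by linarith)
  · rw [sign_pos ha, SignType.coe_one, abs_of_pos ha]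
    constructor
    · rintro rfl
      simp [abs_of_nonneg hτ]
    · rintro ⟨-, h⟩
      exact mul_right_cancel₀ ha.ne' (by linarith)

lemma smul_subdiff_l1 {d : ℕ} (x : EuclideanSpace ℝ (Fin d)) {τ : ℝ} (hτ : 0 ≤ τ) :
    τ • subdiff (fun y => ∑ i, |y i|) x = {v | ∀ i, v i ∈ dilatedAbsSubdiff τ (x i)} := by
  ext v
  simp only [mem_ofPred_eq, mem_dilatedAbsSubdiff_iff hτ]
  rcases hτ.eq_or_lt with rfl | hτ
  · choose u hu using fun i => nonempty_dilatedAbsSubdiff zero_le_one (x i)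
    have hne : (subdiff (fun y => ∑ i, |y i|) x).Nonempty := by
      refine ⟨WithLp.toLp 2 u, mem_subdiff_l1_iff.2 fun i => ?_⟩
      simpa using (mem_dilatedAbsSubdiff_iff zero_le_one).1 (hu i)
    rw [zero_smul_set hne, mem_zero]
    refine ⟨fun hv i => by simp [hv], fun hv => ?_⟩
    ext i
    exact abs_nonpos_iff.1 (hv i).1
  · rw [mem_smul_set_iff_inv_smul_mem₀ hτ.ne', mem_subdiff_l1_iff]
    refine forall_congr' fun i => ?_
    simp only [PiLp.smul_apply, smul_eq_mul, abs_mul, abs_inv, abs_of_pos hτ]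
    rw [inv_mul_le_iff₀ hτ, mul_one, mul_assoc, inv_mul_eq_iff_eq_mul₀ hτ.ne']

lemma infDist_Icc_neg_self {τ : ℝ} (hτ : 0 ≤ τ) (t : ℝ) :
    Metric.infDist t (Icc (-τ) τ) = max (|t| - τ) 0 := by
  have hp : max (-τ) (min t τ) ∈ Icc (-τ) τ :=
    ⟨le_max_left _ _, max_le (by linarith) (min_le_right _ _)⟩
  refine le_antisymm ((Metric.infDist_le_dist_of_mem hp).trans_eq ?_)
    ((Metric.le_infDist ⟨_, hp⟩).2 fun c hc => ?_)
  · rw [Real.dist_eq]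
    grind
  · rw [Real.dist_eq]
    have := abs_sub_abs_le_abs_sub t c
    have := abs_le.2 ⟨hc.1, hc.2⟩
    exact max_le (by linarith) (abs_nonneg _)

lemma infDist_sq_setOf_forall_mem {ι : Type*} [Fintype ι] {C : ι → Set ℝ}
    (hC : ∀ i, IsClosed (C i)) (hne : ∀ i, (C i).Nonempty) (g : EuclideanSpace ℝ ι) :
    Metric.infDist g {v | ∀ i, v i ∈ C i} ^ 2 = ∑ i, Metric.infDist (g i) (C i) ^ 2 := by
  choose p hpC hp using fun i => (hC i).exists_infDist_eq_dist (hne i) (g i)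
  have hpmem : WithLp.toLp 2 p ∈ {v : EuclideanSpace ℝ ι | ∀ i, v i ∈ C i} := hpC
  suffices Metric.infDist g {v | ∀ i, v i ∈ C i} = √(∑ i, Metric.infDist (g i) (C i) ^ 2) by
    rw [this, sq_sqrt (by positivity)]
  refine le_antisymm ?_ ((Metric.le_infDist ⟨_, hpmem⟩).2 fun v hv => ?_)
  · refine (Metric.infDist_le_dist_of_mem hpmem).trans_eq ?_
    rw [EuclideanSpace.dist_eq]
    simp_rw [hp]
  · rw [EuclideanSpace.dist_eq]
    gcongr with i
    · exact Metric.infDist_nonneg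
    · exact Metric.infDist_le_dist_of_mem (hv i)

lemma integral_stdGaussian_sum {d : ℕ} {f : Fin d → ℝ → ℝ}
    (hf : ∀ i, Integrable (f i) (gaussianReal 0 1)) :
    ∫ g, ∑ i, f i (g i) ∂stdGaussian d = ∑ i, ∫ t, f i t ∂gaussianReal 0 1 := by
  rw [_root_.stdGaussian, integral_map_equiv]
  change ∫ x : Fin d → ℝ, ∑ i, f i (x i) ∂_ = _
  rw [integral_finsetSum _ fun i _ => integrable_comp_eval (hf i)]
  exact Finset.sum_congr rfl fun i _ => integral_comp_eval (hf i).aestronglyMeasurable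

lemma integrable_infDist_sq {μ : Measure ℝ} [IsFiniteMeasure μ] (hμ : MemLp id 2 μ) (C : Set ℝ) :
    Integrable (fun t => Metric.infDist t C ^ 2) μ := by
  refine MemLp.integrable_sq <| (hμ.norm.add (memLp_const (Metric.infDist 0 C))).of_le
    (Metric.continuous_infDist_pt C).aestronglyMeasurable (.of_forall fun t => ?_)
  have := Metric.infDist_le_infDist_add_dist (x := t) (y := 0) (s := C)
  simp only [Real.norm_eq_abs, Pi.add_apply, id, dist_zero_right] at this ⊢
  rw [abs_of_nonneg Metric.infDist_nonneg,
    abs_of_nonneg (add_nonneg (abs_nonneg t) Metric.infDist_nonneg)]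
  linarith

lemma integral_sub_sq_gaussianReal (μ c : ℝ) (v : ℝ≥0) :
    ∫ t, (t - c) ^ 2 ∂gaussianReal μ v = v + (μ - c) ^ 2 := by
  have hid : Integrable (fun t => t) (gaussianReal μ v) :=
    (memLp_id_gaussianReal 1).integrable le_rfl
  have hvar := variance_eq_sub (X := fun t => t - c)
    ((memLp_id_gaussianReal (μ := μ) (v := v) 2).sub (memLp_const c))
  rw [variance_sub_const (X := fun t => t) aestronglyMeasurable_id,
    variance_fun_id_gaussianReal, integral_sub hid (integrable_const c),
    integral_id_gaussianReal, integral_const] at hvar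
  simp only [Pi.pow_apply, probReal_univ, smul_eq_mul, one_mul] at hvar
  linarith

lemma integral_max_abs_sub_sq_gaussianReal {τ : ℝ} (hτ : 0 ≤ τ) :
    ∫ t, max (|t| - τ) 0 ^ 2 ∂gaussianReal 0 1
      = √(2 / π) * ∫ u in Ioi τ, (u - τ) ^ 2 * exp (-u ^ 2 / 2) := by
  set h : ℝ → ℝ := fun u => max (u - τ) 0 ^ 2 * exp (-u ^ 2 / 2)
  have hpdf : ∀ t, gaussianPDFReal 0 1 t • max (|t| - τ) 0 ^ 2 = (√(2 * π))⁻¹ * h |t| := by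
    intro t
    simp only [gaussianPDFReal, NNReal.coe_one, mul_one, sub_zero, smul_eq_mul, sq_abs, h]
    ring
  have hrestrict : ∫ u in Ioi 0, h u = ∫ u in Ioi τ, h u :=
    setIntegral_eq_of_subset_of_forall_sdiff_eq_zero measurableSet_Ioi (Ioi_subset_Ioi hτ)
      fun u hu => by
        simp only [mem_sdiff, mem_Ioi, not_lt] at hu
        simp [h, hu.2]
  have hpos : ∫ u in Ioi τ, h u = ∫ u in Ioi τ, (u - τ) ^ 2 * exp (-u ^ 2 / 2) :=
    setIntegral_congr_fun measurableSet_Ioi fun u hu => by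
      simp [h, le_of_lt (sub_pos.mpr (mem_Ioi.mp hu))]
  have hconst : (√(2 * π))⁻¹ * 2 = √(2 / π) := by
    rw [sqrt_div' _ pi_pos.le, sqrt_mul' _ pi_pos.le]
    have h2 : √2 * √2 = 2 := mul_self_sqrt zero_le_two
    have : 0 < √π := sqrt_pos.mpr pi_pos
    field_simp
    linarith
  rw [integral_gaussianReal_eq_integral_smul one_ne_zero]
  simp_rw [hpdf]
  rw [integral_const_mul, integral_comp_abs (f := h), hrestrict, hpos, ← mul_assoc, hconst]

lemma integral_infDist_sq_dilatedAbsSubdiff_of_ne_zero {τ a : ℝ} (ha : a ≠ 0) :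
    ∫ t, Metric.infDist t (dilatedAbsSubdiff τ a) ^ 2 ∂gaussianReal 0 1 = 1 + τ ^ 2 := by
  simp_rw [dilatedAbsSubdiff, if_neg ha, Metric.infDist_singleton, Real.dist_eq, sq_abs]
  rw [integral_sub_sq_gaussianReal]
  rcases lt_or_gt_of_ne ha with ha | ha
  · simp [sign_neg ha]
  · simp [sign_pos ha]

lemma integral_infDist_sq_dilatedAbsSubdiff_zero {τ : ℝ} (hτ : 0 ≤ τ) :
    ∫ t, Metric.infDist t (dilatedAbsSubdiff τ 0) ^ 2 ∂gaussianReal 0 1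
      = √(2 / π) * ∫ u in Ioi τ, (u - τ) ^ 2 * exp (-u ^ 2 / 2) := by
  simp_rw [dilatedAbsSubdiff, if_pos, infDist_Icc_neg_self hτ]
  exact integral_max_abs_sub_sq_gaussianReal hτ

lemma Fin.sum_ite_val_lt {d s : ℕ} (hsd : s ≤ d) (a b : ℝ) :
    ∑ i : Fin d, (if (i : ℕ) < s then a else b) = s * a + (d - s) * b := by
  have hs : (Finset.univ.filter fun i : Fin d => (i : ℕ) < s).card = s := by
    rw [Fin.card_filter_val_lt, min_eq_right hsd]
  rw [Finset.sum_ite, Finset.sum_const, Finset.sum_const, Finset.filter_not,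
    Finset.card_sdiff_of_subset (Finset.filter_subset _ _), hs]
  simp [Nat.cast_sub hsd]

theorem expected_dist_sq_l1_subdiff_general (d s : ℕ) (hsd : s ≤ d)
    (x : EuclideanSpace ℝ (Fin d))
    (hsupp : ∀ i : Fin d, ((i : ℕ) < s → x i ≠ 0) ∧ (s ≤ (i : ℕ) → x i = 0))
    (τ : ℝ) (hτ : 0 ≤ τ) :
    ∫ g, (Metric.infDist g (τ • subdiff (fun y => ∑ i, |y i|) x)) ^ 2 ∂(stdGaussian d)
      = (s : ℝ) * (1 + τ ^ 2)
        + ((d : ℝ) - s) * Real.sqrt (2 / π)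
          * ∫ u in Set.Ioi τ, (u - τ) ^ 2 * Real.exp (-u ^ 2 / 2) := by
  have hcoord : ∀ i : Fin d,
      ∫ t, Metric.infDist t (dilatedAbsSubdiff τ (x i)) ^ 2 ∂gaussianReal 0 1
        = if (i : ℕ) < s then 1 + τ ^ 2
          else √(2 / π) * ∫ u in Ioi τ, (u - τ) ^ 2 * exp (-u ^ 2 / 2) := by
    intro i
    split_ifs with hi
    · exact integral_infDist_sq_dilatedAbsSubdiff_of_ne_zero ((hsupp i).1 hi)
    · rw [(hsupp i).2 (not_lt.1 hi)]
      exact integral_infDist_sq_dilatedAbsSubdiff_zero hτ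
  simp_rw [smul_subdiff_l1 x hτ, infDist_sq_setOf_forall_mem
    (fun _ => isClosed_dilatedAbsSubdiff) (fun i => nonempty_dilatedAbsSubdiff hτ (x i))]
  rw [integral_stdGaussian_sum fun i => integrable_infDist_sq (memLp_id_gaussianReal 2) _,
    Finset.sum_congr rfl fun i _ => hcoord i, Fin.sum_ite_val_lt hsd]
  ring

/-- For `x ∈ ℝ^d` with its first `s` entries nonzero and the rest zero, the expected
squared distance from a standard Gaussian vector to the dilated subdifferential
`τ·∂‖x‖₁` equals `s(1+τ²) + (d−s)·√(2/π)·∫_τ^∞ (u−τ)² e^{−u²/2} du`. -/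
theorem expected_dist_sq_l1_subdiff (d s : ℕ) (hs : 1 ≤ s) (hsd : s ≤ d)
    (x : EuclideanSpace ℝ (Fin d))
    (hsupp : ∀ i : Fin d, ((i : ℕ) < s → x i ≠ 0) ∧ (s ≤ (i : ℕ) → x i = 0))
    (τ : ℝ) (hτ : 0 ≤ τ) :
    ∫ g, (Metric.infDist g (τ • subdiff (fun y => ∑ i, |y i|) x)) ^ 2 ∂(stdGaussian d)
      = (s : ℝ) * (1 + τ ^ 2)
        + ((d : ℝ) - s) * Real.sqrt (2 / π)
          * ∫ u in Set.Ioi τ, (u - τ) ^ 2 * Real.exp (-u ^ 2 / 2) :=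
  expected_dist_sq_l1_subdiff_general d s hsd x hsupp τ hτ
end
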